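/- arXiv:2201.02438 — 4 statements merged into one kernel-verified Lean document; each statement's English description precedes it below -/
import Mathlib

section
/- In the algebra U, the elements E_{ij} := (1/2){B_i^+, B_j^-} satisfy the gl(n) commutation relations [E_{ij}, E_{kl}] = δ_{jk} E_{il} − δ_{il} E_{kj} for all i, j, k, l ∈ {1,…,n}. -/
open scoped BigOperators

noncomputable section

namespace OspBasis

/-- Commutator. -/
def br {U : Type*} [Ring U] (x y : U) : U := x * y - y * x

/-- Anticommutator. -/
def abr {U : Type*} [Ring U] (x y : U) : U := x * y + y * x

/-- The sign of a generator label: `true` = `+` ↦ 1, `false` = `−` ↦ −1. -/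
def sg : Bool → ℂ := fun b => if b then 1 else -1

/-- Generators `B_j^±` of (the universal enveloping algebra of) `osp(1|2n)` together with
the Ganchev–Palev relations. -/
structure OspData (n : ℕ) (U : Type*) [Ring U] [Algebra ℂ U] where
  B : Bool → Fin n → U
  rel : ∀ (i j l : Fin n) (ξ η ε : Bool),
    br (abr (B ξ i) (B η j)) (B ε l) =
      (sg ε - sg η) • (if j = l then B ξ i else 0) +
      (sg ε - sg ξ) • (if i = l then B η j else 0)

variable {n : ℕ} {U : Type*} [Ring U] [Algebra ℂ U]

/-- `E_{ij} := (1/2){B_i^+, B_j^-}`. -/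
def Eop (d : OspData n U) (i j : Fin n) : U :=
  (2 : ℂ)⁻¹ • abr (d.B true i) (d.B false j)

/-- `h_i := E_{ii} − i + 1` (in 1-indexed notation); with 0-indexing, `h_i = E_{ii} − i`. -/
def hOp (d : OspData n U) (i : Fin n) : U :=
  Eop d i i - (((i : ℕ) : ℂ)) • (1 : U)

/- ### Combinatorics of partitions and tableaux -/

/-- The number of columns of (the Young diagram of) `lam`. -/
def width (lam : Fin n → ℕ) : ℕ := Finset.univ.sup lam

/-- The length of the `l`-th column (0-indexed) of the diagram of `lam`. -/
def colLen (lam : Fin n → ℕ) (l : ℕ) : ℕ :=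
  (Finset.univ.filter (fun k : Fin n => l < lam k)).card

/-- `ℓ(λ)`, the number of nonzero parts. -/
def plen (lam : Fin n → ℕ) : ℕ :=
  (Finset.univ.filter (fun k : Fin n => 0 < lam k)).card

/-- A filling `A : ℕ → ℕ → Fin n` (row, column) is semistandard for the shape `lam`:
rows weakly increase, columns strictly increase (only cells of the diagram matter). -/
def IsSSYT (lam : Fin n → ℕ) (A : ℕ → ℕ → Fin n) : Prop :=
  (∀ (k : Fin n) (l1 l2 : ℕ), l1 ≤ l2 → l2 < lam k → A (k : ℕ) l1 ≤ A (k : ℕ) l2) ∧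
  (∀ (k1 k2 : Fin n) (l : ℕ), k1 < k2 → l < lam k2 → A (k1 : ℕ) l < A (k2 : ℕ) l)

/-- A filling is normalized if it takes the default value `0` outside the diagram of `lam`;
this makes the representation of a tableau by a total function unique. -/
def IsNormalized (hn : 0 < n) (lam : Fin n → ℕ) (A : ℕ → ℕ → Fin n) : Prop :=
  ∀ k l : ℕ, (∀ hk : k < n, lam ⟨k, hk⟩ ≤ l) → A k l = ⟨0, hn⟩

/-- The exponent matrix `γ_A`: `(γ_A)_{ij}` = number of entries equal to `i` in row `j`. -/
def expMat (lam : Fin n → ℕ) (A : ℕ → ℕ → Fin n) : Matrix (Fin n) (Fin n) ℕ :=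
  Matrix.of fun i j => ((Finset.range (lam j)).filter (fun l => A (j : ℕ) l = i)).card

/-- The `j`-th row of `D(γ)` as a list: `γ_{ij}` copies of `i`, in increasing order of `i`. -/
def rowList (γ : Matrix (Fin n) (Fin n) ℕ) (j : Fin n) : List (Fin n) :=
  (List.finRange n).flatMap (fun i => List.replicate (γ i j) i)

/-- The row-weakly-increasing filling `D(γ)` having `γ_{ij}` entries equal to `i` in row `j`. -/
def Dfill (hn : 0 < n) (γ : Matrix (Fin n) (Fin n) ℕ) : ℕ → ℕ → Fin n :=
  fun k l => if hk : k < n then (rowList γ ⟨k, hk⟩).getD l ⟨0, hn⟩ else ⟨0, hn⟩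

/-- The Young subgroup `S_{λ'}` acting on columns. -/
abbrev ColPerm (lam : Fin n → ℕ) :=
  ∀ l : Fin (width lam), Equiv.Perm (Fin (colLen lam (l : ℕ)))

/-- The Young subgroup `S_λ` acting on rows. -/
abbrev RowPerm (lam : Fin n → ℕ) :=
  ∀ k : Fin n, Equiv.Perm (Fin (lam k))

/-- The column-permuted filling `A_σ(k,l) = A(σ_l(k), l)`. -/
def colPermute (lam : Fin n → ℕ) (A : ℕ → ℕ → Fin n) (σ : ColPerm lam) : ℕ → ℕ → Fin n :=
  fun k l =>
    if hl : l < width lam then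
      if hk : k < colLen lam l then A ((σ ⟨l, hl⟩) ⟨k, hk⟩ : ℕ) l else A k l
    else A k l

/-- The row-permuted filling `A^τ(k,l) = A(k, τ_k(l))`. -/
def rowPermute (lam : Fin n → ℕ) (A : ℕ → ℕ → Fin n) (τ : RowPerm lam) : ℕ → ℕ → Fin n :=
  fun k l =>
    if hk : k < n then
      if hl : l < lam ⟨k, hk⟩ then A k ((τ ⟨k, hk⟩) ⟨l, hl⟩ : ℕ) else A k l
    else A k l

/-- `sgn(σ) = sgn(σ_1)⋯sgn(σ_{ℓ(λ')})`. -/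
def sgnC (lam : Fin n → ℕ) (σ : ColPerm lam) : ℂ :=
  ∏ l : Fin (width lam), ((Equiv.Perm.sign (σ l) : ℤ) : ℂ)

/-- `B_A^+`, the column-by-column (left to right), top-to-bottom ordered product of the
creation operators prescribed by the filling `A`. -/
def BAop (d : OspData n U) (lam : Fin n → ℕ) (A : ℕ → ℕ → Fin n) : U :=
  ((List.range (width lam)).map (fun l =>
    ((List.range (colLen lam l)).map (fun k => d.B true (A k l))).prod)).prod

/-- The monomial `E^γ = ∏→_{k=2..n} (E_{k1}^{γ_{k1}} ⋯ E_{k,k−1}^{γ_{k,k−1}})`. -/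
def Epow (d : OspData n U) (γ : Matrix (Fin n) (Fin n) ℕ) : U :=
  ((List.finRange n).map (fun (k : Fin n) =>
    ((List.finRange n).map (fun (j : Fin n) =>
      if (j : ℕ) < (k : ℕ) then (Eop d k j) ^ (γ k j) else 1)).prod)).prod

variable {M : Type*} [AddCommGroup M] [Module ℂ M] [Module U M]

/-- `ω_A := Σ_{σ ∈ S_{λ'}} sgn(σ) B^+_{A_σ} v₀`. -/
def omegaA (d : OspData n U) (lam : Fin n → ℕ) (v0 : M) (A : ℕ → ℕ → Fin n) : M :=
  ∑ σ : ColPerm lam, sgnC lam σ • ((BAop d lam (colPermute lam A σ)) • v0)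

/-- `Ω_A := Σ_{τ ∈ S_λ} ω_{A^τ}`. -/
def OmegaA (d : OspData n U) (lam : Fin n → ℕ) (v0 : M) (A : ℕ → ℕ → Fin n) : M :=
  ∑ τ : RowPerm lam, omegaA d lam v0 (rowPermute lam A τ)

/-- `Ω_λ := Ω_{D(γ_λ)}` where `γ_λ = diag(λ_1,…,λ_n)`. -/
def OmegaLam (d : OspData n U) (hn : 0 < n) (lam : Fin n → ℕ) (v0 : M) : M :=
  OmegaA d lam v0 (Dfill hn (Matrix.diagonal lam))

/- ### Mickelsson–Zhelobenko raising and lowering operators -/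

/-- Ordered product over a finite set of (pairwise commuting) algebra elements. -/
def oprod (S : Finset (Fin n)) (f : Fin n → U) : U :=
  ((S.sort (· ≤ ·)).map f).prod

/-- `E^{e_I} = E_{i_2 i_1} E_{i_3 i_2} ⋯ E_{i_s i_{s−1}}` for `I = (i_1, …, i_s)`. -/
def chainE (d : OspData n U) : List (Fin n) → U
  | a :: b :: rest => Eop d b a * chainE d (b :: rest)
  | _ => 1

/-- `∏_{u} γ_{i_{u+1} i_u}` over consecutive pairs of a list. -/
def chainProd (γ : Matrix (Fin n) (Fin n) ℕ) : List (Fin n) → ℕ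
  | a :: b :: rest => γ b a * chainProd γ (b :: rest)
  | _ => 1

/-- `e_I = Σ_u e_{i_{u+1} i_u}` over consecutive pairs of a list. -/
def eJmat : List (Fin n) → Matrix (Fin n) (Fin n) ℕ
  | a :: b :: rest => Matrix.single b a 1 + eJmat (b :: rest)
  | _ => 0

/-- The increasing sequence `I ∈ 𝓘_{ij}(s)` determined by its set `{i} ∪ {j} ∪ T` of members. -/
def sortIns (i j : Fin n) (T : Finset (Fin n)) : List (Fin n) :=
  Finset.sort (insert i (insert j T)) (· ≤ ·)

/-- The normalized raising operator `z_j^+`. -/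
def zplus (d : OspData n U) (j : Fin n) : U :=
  ∑ i ∈ Finset.Iic j, ∑ T ∈ (Finset.Ioo i j).powerset,
    ((-1 : ℂ) ^ (T.card + (if i = j then 0 else 1))) •
      (chainE d (sortIns i j T) * d.B true i *
        oprod ((Finset.Ioo i j) \ T) (fun l => hOp d l - hOp d j - 1) *
        oprod (Finset.Iio i) (fun l => hOp d l - hOp d j))

/-- The normalized lowering operator `z_j^-`. -/
def zminus (d : OspData n U) (j : Fin n) : U :=
  ∑ i ∈ Finset.Ici j, ∑ T ∈ (Finset.Ioo j i).powerset,
    chainE d (sortIns j i T) * d.B false i *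
      oprod ((Finset.Ioi j) \ (insert i T)) (fun l => hOp d j - hOp d l)

/-- The `gl`-lowering operator `y_{mj}` (for `j < m`). -/
def yop (d : OspData n U) (m j : Fin n) : U :=
  Eop d m j * oprod (Finset.Ioo j m) (fun l => hOp d j - hOp d l)
  + ∑ i ∈ Finset.Ioo j m, ∑ T ∈ (Finset.Ioo j i).powerset,
      chainE d (sortIns j i T) * Eop d m i *
        oprod ((Finset.Ioo j m) \ (insert j (insert i T))) (fun l => hOp d j - hOp d l)

/-- `∏→_{k=2..n} (y_{k1}^{γ_{k1}} ⋯ y_{k,k−1}^{γ_{k,k−1}})`. -/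
def Ypow (d : OspData n U) (γ : Matrix (Fin n) (Fin n) ℕ) : U :=
  ((List.finRange n).map (fun (k : Fin n) =>
    ((List.finRange n).map (fun (j : Fin n) =>
      if (j : ℕ) < (k : ℕ) then (yop d k j) ^ (γ k j) else 1)).prod)).prod

/-- `(z_n^+)^{λ_n} ⋯ (z_1^+)^{λ_1}`. -/
def Zword (d : OspData n U) (lam : Fin n → ℕ) : U :=
  ((List.finRange n).reverse.map (fun j => (zplus d j) ^ (lam j))).prod

/- ### The coefficients `d_i^±(λ)` -/

/-- Extension of `λ` by zero; `lamext lam a = λ_{a+1}` in 1-indexed notation, `λ_{n+1} = 0`. -/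
def lamext (lam : Fin n → ℕ) (a : ℕ) : ℕ := if h : a < n then lam ⟨a, h⟩ else 0

/-- `[m]_2`: 0 if `m` is even, 1 if `m` is odd. -/
def parZ (m : ℤ) : ℕ := m.natAbs % 2

/-- The coefficient `d_i^+(λ)`. -/
def dplus (lam : Fin n → ℕ) (i : Fin n) : ℂ :=
  ((-1 : ℂ)) ^ (∑ a ∈ Finset.Ico (i : ℕ) n,
      (a + 2) * ((lamext lam a - lamext lam (a + 1)) + (if a = (i : ℕ) then 1 else 0)))
    / (((lam i : ℂ) + 1) * (((i : ℕ) : ℂ) + 1))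
    * ∏ l ∈ Finset.Iio i,
        (((lam i : ℂ) - (lam l : ℂ) - ((i : ℕ) : ℂ) + ((l : ℕ) : ℂ) + 1) /
         ((lam i : ℂ) - (lam l : ℂ) - ((i : ℕ) : ℂ) + ((l : ℕ) : ℂ) +
           (parZ ((lam i : ℤ) - (lam l : ℤ)) : ℂ)))

/-- The coefficient `d_i^-(λ)`. -/
def dminus (p : ℕ) (lam : Fin n → ℕ) (i : Fin n) : ℂ :=
  ((-1 : ℂ)) ^ (∑ a ∈ Finset.Ico (i : ℕ) n, (a + 2) * (lamext lam a - lamext lam (a + 1)))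
    * ((lam i : ℂ) + 1) * (((i : ℕ) : ℂ) + 1)
    * ((lam i : ℂ) + (n : ℂ) - (((i : ℕ) : ℂ) + 1) + (parZ (lam i : ℤ) : ℂ) * ((p : ℂ) - (n : ℂ)))
    * ∏ l ∈ Finset.Ioi i,
        (((lam i : ℂ) - (lam l : ℂ) - ((i : ℕ) : ℂ) + ((l : ℕ) : ℂ) - 1) /
         ((lam i : ℂ) - (lam l : ℂ) - ((i : ℕ) : ℂ) + ((l : ℕ) : ℂ) -
           (parZ ((lam i : ℤ) - (lam l : ℤ)) : ℂ)))

/-- The index set of semistandard Young tableaux with at most `p` rows (shape bundled),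
in normalized total-function representation. -/
def SSYTp (hn : 0 < n) (p : ℕ) :=
  {x : (Fin n → ℕ) × (ℕ → ℕ → Fin n) //
    Antitone x.1 ∧ plen x.1 ≤ p ∧ IsSSYT x.1 x.2 ∧ IsNormalized hn x.1 x.2}

end OspBasis

open OspBasis

/-
The Ganchev–Palev relations with `(ξ, η) = (+, −)` say that the derivation `ad E_{ij}` acts on the
generators by `B_k^+ ↦ δ_{jk} B_i^+` and `B_l^- ↦ −δ_{il} B_j^-`; the Leibniz rule applied to
`E_{kl} = ½ {B_k^+, B_l^-}` then yields the `gl(n)` relations.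
-/

lemma br_abr_right {U : Type*} [Ring U] (a x y : U) :
    br a (abr x y) = abr (br a x) y + abr x (br a y) := by
  simp only [br, abr]
  noncomm_ring

section Bracket

variable {R U : Type*} [CommSemiring R] [Ring U] [Algebra R U]

lemma br_smul_left (c : R) (x y : U) : br (c • x) y = c • br x y := by
  simp only [br, smul_sub, smul_mul_assoc, mul_smul_comm]

lemma br_smul_right (c : R) (x y : U) : br x (c • y) = c • br x y := by
  simp only [br, smul_sub, smul_mul_assoc, mul_smul_comm]

end Bracket

section Generators

variable {n : ℕ} {U : Type*} [Ring U] [Algebra ℂ U]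

lemma br_Eop_B_true (d : OspData n U) (i j k : Fin n) :
    br (Eop d i j) (d.B true k) = if j = k then d.B true i else 0 := by
  rw [Eop, br_smul_left, d.rel i j k true false true]
  norm_num [sg, smul_smul]

lemma br_Eop_B_false (d : OspData n U) (i j k : Fin n) :
    br (Eop d i j) (d.B false k) = -(if i = k then d.B false j else 0) := by
  rw [Eop, br_smul_left, d.rel i j k true false false]
  split_ifs <;> norm_num [sg, smul_smul]

end Generators

theorem stmt0_general {n : ℕ} {U : Type*} [Ring U] [Algebra ℂ U] (d : OspData n U)
    (i j k l : Fin n) :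
    br (Eop d i j) (Eop d k l) =
      (if j = k then Eop d i l else 0) - (if i = l then Eop d k j else 0) := by
  rw [Eop.eq_1 d k l, br_smul_right, br_abr_right, br_Eop_B_true, br_Eop_B_false]
  split_ifs <;> simp [Eop, abr, smul_add] <;> abel

theorem stmt0 {n : ℕ} (hn : 0 < n) {U : Type*} [Ring U] [Algebra ℂ U] (d : OspData n U)
    (i j k l : Fin n) :
    br (Eop d i j) (Eop d k l) =
      (if j = k then Eop d i l else 0) - (if i = l then Eop d k j else 0) :=
  stmt0_general d i j k l
end
end

section
/- Let λ ∈ ℙ and let γ ∈ M_n(ℕ) have column sums λ. Then the filling D(γ) is a semistandard Young tableau (D(γ) ∈ Y(λ)) if and only if γ is lower triangular (γ_{ki} = 0 for k < i) and Σ_{k=i}^{j} γ_{ki} ≥ Σ_{k=i+1}^{j+1} γ_{k,i+1} for all 1 ≤ i ≤ j ≤ n−1. -/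
open scoped BigOperators

noncomputable section

open OspBasis

/-!
Row `r` of `D(γ)` is sorted, so its `l`-th entry is `< m` exactly when `l` is smaller than the
number `rowCountLT γ r m = ∑_{k < m} γ_{kr}` of entries `< m` in that row. Since `λ` is a
partition, column strictness reduces to consecutive rows, and for rows `r`, `r + 1` it becomes
`rowCountLT γ (r + 1) (m + 1) ≤ rowCountLT γ r m` for all `m`. The cases `m ≤ r` force `γ` to be
lower triangular by induction on `r`; then the counts are the partial column sums of the
statement, and for `m ≥ n` the inequality is `λ_{r+1} ≤ λ_r`.
-/

theorem List.Pairwise.lt_countP_iff {α : Type*} [Preorder α] {L : List α}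
    (hL : L.Pairwise (· ≤ ·)) {p : α → Bool} (hp : ∀ x y, x ≤ y → p y → p x) (l : ℕ) :
    l < L.countP p ↔ ∃ h : l < L.length, p L[l] := by
  induction L generalizing l with
  | nil => simp
  | cons a L ih =>
    by_cases ha : p a
    · cases l with
      | zero => simp [ha]
      | succ l => simp [ha, ih hL.of_cons]
    · have hrest : ∀ x ∈ L, ¬ p x := fun x hx hpx =>
        ha (hp a x (List.rel_of_pairwise_cons hL hx) hpx)
      rw [List.countP_cons_of_neg ha, List.countP_eq_zero.2 hrest]
      simp only [Nat.not_lt_zero, false_iff, not_exists]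
      intro h
      cases l with
      | zero => exact ha
      | succ l => exact hrest _ (List.getElem_mem _)

namespace OspBasis

variable {n : ℕ}

def rowCountLT (γ : Matrix (Fin n) (Fin n) ℕ) (r : Fin n) (m : ℕ) : ℕ :=
  ∑ k ∈ Finset.univ.filter (fun k : Fin n => (k : ℕ) < m), γ k r

lemma length_rowList (γ : Matrix (Fin n) (Fin n) ℕ) (r : Fin n) :
    (rowList γ r).length = ∑ i, γ i r := by
  simp [rowList, List.length_flatMap, Fin.sum_univ_def]

lemma pairwise_rowList (γ : Matrix (Fin n) (Fin n) ℕ) (r : Fin n) :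
    (rowList γ r).Pairwise (· ≤ ·) := by
  refine List.pairwise_flatMap.2 ⟨fun i _ => List.pairwise_replicate.2 (Or.inr le_rfl), ?_⟩
  refine (List.pairwise_le_finRange n).imp fun hij x hx y hy => ?_
  rwa [List.eq_of_mem_replicate hx, List.eq_of_mem_replicate hy]

lemma countP_rowList (γ : Matrix (Fin n) (Fin n) ℕ) (r : Fin n) (m : ℕ) :
    (rowList γ r).countP (fun x : Fin n => (x : ℕ) < m) = rowCountLT γ r m := by
  rw [rowList, List.countP_flatMap, rowCountLT, Finset.sum_filter, Fin.sum_univ_def]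
  simp [Function.comp_def, List.countP_replicate]

lemma Dfill_coe (hn : 0 < n) (γ : Matrix (Fin n) (Fin n) ℕ) (r : Fin n) (l : ℕ) :
    Dfill hn γ r l = (rowList γ r).getD l ⟨0, hn⟩ := by
  simp [Dfill]

lemma lt_rowCountLT_iff (hn : 0 < n) (γ : Matrix (Fin n) (Fin n) ℕ) (r : Fin n) (m l : ℕ) :
    l < rowCountLT γ r m ↔ l < ∑ i, γ i r ∧ (Dfill hn γ r l : ℕ) < m := by
  rw [← countP_rowList, ← length_rowList,
    (pairwise_rowList γ r).lt_countP_iff (fun x y hxy hy => by simp at hy ⊢; omega)]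
  refine ⟨fun ⟨hl, hlm⟩ => ?_, fun ⟨hl, hlm⟩ => ?_⟩ <;> simp_all [Dfill_coe]

lemma Dfill_le_Dfill (hn : 0 < n) (γ : Matrix (Fin n) (Fin n) ℕ) (r : Fin n) {l₁ l₂ : ℕ}
    (hl : l₁ ≤ l₂) (hl₂ : l₂ < ∑ i, γ i r) : Dfill hn γ r l₁ ≤ Dfill hn γ r l₂ := by
  have h₂ : l₂ < rowCountLT γ r (Dfill hn γ r l₂ + 1) :=
    (lt_rowCountLT_iff hn γ r _ _).2 ⟨hl₂, Nat.lt_succ_self _⟩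
  have h₁ := ((lt_rowCountLT_iff hn γ r _ _).1 (hl.trans_lt h₂)).2
  exact Fin.le_def.2 (Nat.lt_succ_iff.1 h₁)

lemma Dfill_lt_Dfill_iff (hn : 0 < n) (γ : Matrix (Fin n) (Fin n) ℕ) {r r' : Fin n}
    (hlen : ∑ i, γ i r' ≤ ∑ i, γ i r) :
    (∀ l < ∑ i, γ i r', Dfill hn γ r l < Dfill hn γ r' l) ↔
      ∀ m, rowCountLT γ r' (m + 1) ≤ rowCountLT γ r m := by
  constructor
  · intro h m
    refine le_of_forall_lt fun l hl => ?_
    obtain ⟨hl', hlm⟩ := (lt_rowCountLT_iff hn γ r' _ _).1 hl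
    refine (lt_rowCountLT_iff hn γ r _ _).2 ⟨hl'.trans_le hlen, ?_⟩
    have := Fin.lt_def.1 (h l hl')
    omega
  · intro h l hl
    have hl' : l < rowCountLT γ r' (Dfill hn γ r' l + 1) :=
      (lt_rowCountLT_iff hn γ r' _ _).2 ⟨hl, Nat.lt_succ_self _⟩
    exact Fin.lt_def.2 ((lt_rowCountLT_iff hn γ r _ _).1 (hl'.trans_le (h _))).2

lemma isSSYT_iff_succ {lam : Fin n → ℕ} (hlam : Antitone lam) (A : ℕ → ℕ → Fin n) :
    IsSSYT lam A ↔
      (∀ (k : Fin n) (l₁ l₂ : ℕ), l₁ ≤ l₂ → l₂ < lam k → A k l₁ ≤ A k l₂) ∧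
      ∀ (r : ℕ) (hr : r + 1 < n) (l : ℕ), l < lam ⟨r + 1, hr⟩ → A r l < A (r + 1) l := by
  refine and_congr_right fun _ => ⟨fun h r hr l hl => h ⟨r, by omega⟩ ⟨r + 1, hr⟩ l
    (Fin.mk_lt_mk.2 r.lt_succ_self) hl, fun h => ?_⟩
  suffices ∀ (b : ℕ) (hb : b < n) (a : ℕ), a < b → ∀ l, l < lam ⟨b, hb⟩ → A a l < A b l from
    fun k₁ k₂ l hk hl => this k₂ k₂.isLt k₁ hk l hl
  intro b
  induction b with
  | zero => omega
  | succ r ih =>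
    intro hb a ha l hl
    have hstep := h r hb l hl
    rcases Nat.lt_succ_iff_lt_or_eq.1 ha with ha | rfl
    · exact (ih (by omega) a ha l (hl.trans_le (hlam (Fin.mk_le_mk.2 r.le_succ)))).trans hstep
    · exact hstep

def RowCountsInterlace (γ : Matrix (Fin n) (Fin n) ℕ) : Prop :=
  ∀ (r : ℕ) (hr : r + 1 < n) (m : ℕ),
    rowCountLT γ ⟨r + 1, hr⟩ (m + 1) ≤ rowCountLT γ ⟨r, by omega⟩ m

lemma isSSYT_Dfill_iff (hn : 0 < n) {lam : Fin n → ℕ} (hlam : Antitone lam)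
    {γ : Matrix (Fin n) (Fin n) ℕ} (hsum : ∀ j, lam j = ∑ i, γ i j) :
    IsSSYT lam (Dfill hn γ) ↔ RowCountsInterlace γ := by
  rw [isSSYT_iff_succ hlam, RowCountsInterlace,
    and_iff_right fun k l₁ l₂ hl hl₂ => Dfill_le_Dfill hn γ k hl ((hsum k).symm ▸ hl₂)]
  refine forall₂_congr fun r hr => ?_
  have hlen := hlam (Fin.mk_le_mk.2 r.le_succ : (⟨r, by omega⟩ : Fin n) ≤ ⟨r + 1, hr⟩)
  simp only [hsum] at hlen ⊢
  exact Dfill_lt_Dfill_iff hn γ hlen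

lemma rowCountLT_le_sum (γ : Matrix (Fin n) (Fin n) ℕ) (r : Fin n) (m : ℕ) :
    rowCountLT γ r m ≤ ∑ i, γ i r :=
  Finset.sum_le_sum_of_subset (Finset.filter_subset _ _)

lemma rowCountLT_of_le (γ : Matrix (Fin n) (Fin n) ℕ) (r : Fin n) {m : ℕ} (hm : n ≤ m) :
    rowCountLT γ r m = ∑ i, γ i r := by
  rw [rowCountLT, Finset.filter_true_of_mem fun k _ => k.isLt.trans_le hm]

lemma rowCountLT_self_eq_zero {γ : Matrix (Fin n) (Fin n) ℕ} (h : RowCountsInterlace γ)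
    (r : Fin n) : rowCountLT γ r r = 0 := by
  obtain ⟨r, hr⟩ := r
  induction r with
  | zero => simp [rowCountLT]
  | succ r ih => exact Nat.eq_zero_of_le_zero ((h r hr r).trans (ih (by omega)).le)

lemma rowCountLT_eq_zero_of_le {γ : Matrix (Fin n) (Fin n) ℕ}
    (htri : ∀ k i : Fin n, k < i → γ k i = 0) (r : Fin n) {m : ℕ} (hm : m ≤ r) :
    rowCountLT γ r m = 0 :=
  Finset.sum_eq_zero fun k hk => htri k r (by simp at hk; exact Fin.lt_def.2 (by omega))

lemma sum_Icc_eq_rowCountLT {γ : Matrix (Fin n) (Fin n) ℕ}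
    (htri : ∀ k i : Fin n, k < i → γ k i = 0) (i : Fin n) (j : ℕ) :
    ∑ k ∈ Finset.univ.filter (fun k : Fin n => (i : ℕ) ≤ k ∧ (k : ℕ) ≤ j), γ k i =
      rowCountLT γ i (j + 1) := by
  refine Finset.sum_subset (fun k => ?_) fun k hk hk' => htri k i ?_
  · simp only [Finset.mem_filter, Finset.mem_univ, true_and]
    omega
  simp only [Finset.mem_filter, Finset.mem_univ, true_and, not_and, not_le] at hk hk'
  exact Fin.lt_def.2 (by omega)

lemma rowCountsInterlace_iff {γ : Matrix (Fin n) (Fin n) ℕ}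
    (hlen : Antitone fun r => ∑ i, γ i r) :
    RowCountsInterlace γ ↔
      (∀ k i : Fin n, k < i → γ k i = 0) ∧
      ∀ (i j : ℕ) (hij : i ≤ j) (hj : j + 1 < n),
        ∑ k ∈ Finset.univ.filter (fun k : Fin n => i + 1 ≤ (k : ℕ) ∧ (k : ℕ) ≤ j + 1),
            γ k ⟨i + 1, (Nat.succ_le_succ hij).trans_lt hj⟩
          ≤ ∑ k ∈ Finset.univ.filter (fun k : Fin n => i ≤ (k : ℕ) ∧ (k : ℕ) ≤ j),
            γ k ⟨i, hij.trans_lt (Nat.lt_of_succ_lt hj)⟩ := by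
  constructor
  · intro h
    have htri : ∀ k i : Fin n, k < i → γ k i = 0 := fun k i hki => by
      have : γ k i ≤ rowCountLT γ i i := Finset.single_le_sum (f := fun k => γ k i)
        (fun _ _ => Nat.zero_le _) (Finset.mem_filter.2 ⟨Finset.mem_univ _, hki⟩)
      rwa [rowCountLT_self_eq_zero h i, Nat.le_zero] at this
    refine ⟨htri, fun i j hij hj => ?_⟩
    rw [sum_Icc_eq_rowCountLT htri ⟨i + 1, by omega⟩, sum_Icc_eq_rowCountLT htri ⟨i, _⟩]
    exact h i _ (j + 1)
  · rintro ⟨htri, hineq⟩ r hr m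
    rcases le_or_gt m r with hmr | hrm
    · rw [rowCountLT_eq_zero_of_le htri _ (by simpa using hmr)]
      exact Nat.zero_le _
    rcases le_or_gt n m with hnm | hmn
    · rw [rowCountLT_of_le γ _ hnm]
      exact (rowCountLT_le_sum γ _ _).trans (hlen (Fin.mk_le_mk.2 r.le_succ))
    obtain ⟨j, rfl⟩ : ∃ j, m = j + 1 := ⟨m - 1, by omega⟩
    have := hineq r j (by omega) hmn
    rwa [sum_Icc_eq_rowCountLT htri ⟨r + 1, hr⟩, sum_Icc_eq_rowCountLT htri ⟨r, _⟩] at this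

end OspBasis

theorem stmt9 {n : ℕ} (hn : 0 < n) (lam : Fin n → ℕ) (hlam : Antitone lam)
    (γ : Matrix (Fin n) (Fin n) ℕ) (hsum : ∀ j, lam j = ∑ i, γ i j) :
    IsSSYT lam (Dfill hn γ) ↔
      ((∀ k i : Fin n, k < i → γ k i = 0) ∧
       ∀ (i j : ℕ) (hij : i ≤ j) (hj : j + 1 < n),
         ∑ k ∈ Finset.univ.filter (fun k : Fin n => i + 1 ≤ (k : ℕ) ∧ (k : ℕ) ≤ j + 1),
             γ k ⟨i + 1, by omega⟩
           ≤ ∑ k ∈ Finset.univ.filter (fun k : Fin n => i ≤ (k : ℕ) ∧ (k : ℕ) ≤ j),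
             γ k ⟨i, by omega⟩) := by
  have hlen : Antitone fun r => ∑ i, γ i r := funext hsum ▸ hlam
  rw [isSSYT_Dfill_iff hn hlam hsum, rowCountsInterlace_iff hlen]
end
end

section
/- For every j ∈ {1,…,n} and every pair 1 ≤ k < l ≤ n, the element E_{kl} · z_j^- of U lies in the left ideal J := U·span{E_{ab} : 1 ≤ a < b ≤ n}. Consequently, in any U-module, z_j^- maps the subspace of vectors annihilated by all E_{ab} with a < b into itself. -/
/-!
Write `Z_r` (for `r ≥ j`) for `z_j^-` with its chains started at `r` instead of `j`, so that
`Z_j = z_j^-`. Splitting off the first step of each chain gives the recursion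
`Z_r = B_r^- ∏_{ℓ>r} (h_j − h_ℓ) + ∑_{q>r} E_{qr} ∏_{r<ℓ<q} (h_j − h_ℓ) Z_q`.
Let `w` be a vector killed by all `E_{ab}` with `a < b`, and `m = k + 1`. Commuting `E_{km}` through
the recursion, downward induction on `r` gives `E_{km} Z_r w = δ_{rk} (h_k − h_j) Z_m w`, which
vanishes at `r = j`. Since the `E_{k,k+1}` generate all `E_{kl}` with `k < l` by commutators,
`E_{kl} z_j^- w = 0`. Taking for `w` the class of `1` in `U / J` gives `E_{kl} z_j^- ∈ J`.
-/

open scoped BigOperators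

noncomputable section

open OspBasis

namespace Finset

theorem sum_powerset_eq_add_sum_insert_min {α M : Type*} [LinearOrder α] [AddCommMonoid M]
    (s : Finset α) (g : Finset α → M) :
    ∑ T ∈ s.powerset, g T = g ∅ + ∑ q ∈ s, ∑ T ∈ (s.filter (q < ·)).powerset, g (insert q T) := by
  induction s using Finset.induction_on_min with
  | empty => simp
  | insert a s ha ih =>
    have ha' : a ∉ s := fun h => lt_irrefl a (ha a h)
    have hfa : (insert a s).filter (a < ·) = s := by
      rw [filter_insert, if_neg (lt_irrefl a), filter_true_of_mem ha]
    have hfq : ∀ q ∈ s, ∑ T ∈ ((insert a s).filter (q < ·)).powerset, g (insert q T) =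
        ∑ T ∈ (s.filter (q < ·)).powerset, g (insert q T) := fun q hq => by
      rw [filter_insert, if_neg (not_lt.mpr (ha q hq).le)]
    rw [sum_powerset_insert ha', sum_insert ha', hfa, ih, sum_congr rfl hfq]
    abel

theorem Ioo_filter_gt {α : Type*} [LinearOrder α] [LocallyFiniteOrder α] (a b c : α) :
    (Ioo a b).filter (c < ·) = Ioo (max a c) b := by
  ext x
  simp only [mem_filter, mem_Ioo, max_lt_iff]
  tauto

end Finset

theorem List.exists_mul_prod_eq_mul {M : Type*} [Monoid M] {x : M} {L : List M}
    (h : ∀ y ∈ L, ∃ w, x * y = w * x) : ∃ w, x * L.prod = w * x := by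
  induction L with
  | nil => exact ⟨1, by simp⟩
  | cons y L ih =>
    obtain ⟨u, hu⟩ := h y List.mem_cons_self
    obtain ⟨w, hw⟩ := ih fun z hz => h z (List.mem_cons_of_mem y hz)
    exact ⟨u * w, by rw [List.prod_cons, ← mul_assoc, hu, mul_assoc, hw, mul_assoc]⟩

namespace OspBasis

open Finset

theorem mul_eq_mul_add_of_br {R : Type*} [Ring R] {x y z : R} (h : br x y = z) :
    x * y = y * x + z := by
  rw [← h, br, add_sub_cancel]

theorem br_abr {R : Type*} [Ring R] (x y z : R) :
    br x (abr y z) = abr (br x y) z + abr y (br x z) := by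
  simp only [br, abr]; noncomm_ring

section OrderedProduct

variable {n : ℕ} {R : Type*} [Ring R]

theorem oprod_empty (f : Fin n → R) : oprod ∅ f = 1 := by
  simp [oprod]

theorem oprod_insert_of_lt {a : Fin n} {S : Finset (Fin n)} (f : Fin n → R) (h : ∀ b ∈ S, a < b) :
    oprod (insert a S) f = f a * oprod S f := by
  rw [oprod, sort_insert _ (fun b hb => (h b hb).le) (fun ha => lt_irrefl a (h a ha))]
  rfl

theorem oprod_union_of_lt {A B : Finset (Fin n)} (f : Fin n → R) (h : ∀ a ∈ A, ∀ b ∈ B, a < b) :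
    oprod (A ∪ B) f = oprod A f * oprod B f := by
  induction A using Finset.induction_on_min with
  | empty => rw [empty_union, oprod_empty, one_mul]
  | insert a A ha ih =>
    have hB : ∀ b ∈ B, a < b := h a (mem_insert_self a A)
    rw [insert_union, oprod_insert_of_lt f (by simpa [or_imp, forall_and] using ⟨ha, hB⟩),
      oprod_insert_of_lt f ha, ih (fun x hx => h x (mem_insert_of_mem hx)), mul_assoc]

theorem oprod_insert_of_gt {a : Fin n} {S : Finset (Fin n)} (f : Fin n → R) (h : ∀ b ∈ S, b < a) :
    oprod (insert a S) f = oprod S f * f a := by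
  rw [insert_eq, union_comm, oprod_union_of_lt f (by simpa using h)]
  simp [oprod]

theorem commute_oprod {x : R} {S : Finset (Fin n)} {f : Fin n → R}
    (h : ∀ l ∈ S, Commute x (f l)) : Commute x (oprod S f) :=
  Commute.list_prod_right _ _ (by simpa [List.mem_map] using h)

theorem exists_mul_oprod_eq {x : R} {S : Finset (Fin n)} {f : Fin n → R}
    (h : ∀ l ∈ S, ∃ w, x * f l = w * x) : ∃ w, x * oprod S f = w * x :=
  List.exists_mul_prod_eq_mul (by simpa [List.mem_map] using h)

end OrderedProduct

/-! ### Commutation relations -/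

variable {n : ℕ} {U : Type*} [Ring U] [Algebra ℂ U]

theorem br_smul_left (c : ℂ) (x y : U) : br (c • x) y = c • br x y := by
  simp only [br, smul_sub, smul_mul_assoc, mul_smul_comm]

theorem br_smul_right (c : ℂ) (x y : U) : br x (c • y) = c • br x y := by
  simp only [br, smul_sub, smul_mul_assoc, mul_smul_comm]

variable (d : OspData n U)

theorem br_Eop_B_minus (a b l : Fin n) :
    br (Eop d a b) (d.B false l) = -(if a = l then d.B false b else 0) := by
  rw [Eop, br_smul_left, d.rel]
  split_ifs <;> norm_num [sg, smul_smul]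

theorem br_Eop_B_plus (a b l : Fin n) :
    br (Eop d a b) (d.B true l) = if b = l then d.B true a else 0 := by
  rw [Eop, br_smul_left, d.rel]
  split_ifs <;> norm_num [sg, smul_smul]

theorem br_Eop_Eop (a b c e : Fin n) :
    br (Eop d a b) (Eop d c e) =
      (if b = c then Eop d a e else 0) - (if a = e then Eop d c b else 0) := by
  rw [Eop.eq_1 d c e, br_smul_right, br_abr, br_Eop_B_plus, br_Eop_B_minus]
  split_ifs <;> simp only [Eop, abr, zero_mul, mul_zero, add_zero, mul_neg, neg_mul] <;> module

theorem Eop_mul_B_minus (a b l : Fin n) :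
    Eop d a b * d.B false l = d.B false l * Eop d a b - if a = l then d.B false b else 0 := by
  rw [mul_eq_mul_add_of_br (br_Eop_B_minus d a b l), sub_eq_add_neg]

theorem Eop_mul_Eop (a b c e : Fin n) :
    Eop d a b * Eop d c e = Eop d c e * Eop d a b +
      ((if b = c then Eop d a e else 0) - (if a = e then Eop d c b else 0)) :=
  mul_eq_mul_add_of_br (br_Eop_Eop d a b c e)

theorem br_hOp (x : Fin n) (y : U) : br (hOp d x) y = br (Eop d x x) y := by
  simp only [hOp, br, sub_mul, mul_sub, smul_mul_assoc, mul_smul_comm, one_mul, mul_one]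
  abel

theorem hOp_mul_Eop (x a b : Fin n) :
    hOp d x * Eop d a b = Eop d a b * hOp d x +
      ((if x = a then 1 else 0) - (if x = b then 1 else 0) : ℂ) • Eop d a b := by
  refine mul_eq_mul_add_of_br ?_
  rw [br_hOp, br_Eop_Eop]
  split_ifs <;> simp_all

theorem hOp_mul_B_minus (x i : Fin n) :
    hOp d x * d.B false i = d.B false i * hOp d x - if x = i then d.B false i else 0 := by
  rw [mul_eq_mul_add_of_br (by rw [br_hOp, br_Eop_B_minus]), sub_eq_add_neg]
  split_ifs <;> simp_all

theorem commute_hOp_Eop {x a b : Fin n} (ha : x ≠ a) (hb : x ≠ b) :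
    Commute (hOp d x) (Eop d a b) := by
  simpa [Commute, SemiconjBy, ha, hb] using hOp_mul_Eop d x a b

theorem commute_hOp_B_minus {x i : Fin n} (h : x ≠ i) : Commute (hOp d x) (d.B false i) := by
  simpa [Commute, SemiconjBy, h] using hOp_mul_B_minus d x i

theorem commute_hOp_chainE {x : Fin n} :
    ∀ {L : List (Fin n)}, x ∉ L → Commute (hOp d x) (chainE d L)
  | [], _ | [_], _ => Commute.one_right _
  | a :: b :: L, h => by
    simp only [List.mem_cons, not_or] at h
    exact (commute_hOp_Eop d h.2.1 h.1).mul_right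
      (commute_hOp_chainE (L := b :: L) (by simp [h.2.1, h.2.2]))

theorem Eop_mul_hOp (a b x : Fin n) :
    Eop d a b * hOp d x =
      (hOp d x - ((if x = a then 1 else 0) - (if x = b then 1 else 0) : ℂ) • 1) * Eop d a b := by
  rw [sub_mul, hOp_mul_Eop, smul_one_mul, add_sub_cancel_right]

theorem exists_Eop_mul_hOp_sub_hOp (a b x y : Fin n) :
    ∃ w, Eop d a b * (hOp d x - hOp d y) = w * Eop d a b :=
  ⟨_, by rw [mul_sub, Eop_mul_hOp, Eop_mul_hOp, ← sub_mul]⟩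

theorem Eop_mul_hOp_sub_hOp_right {j q m : Fin n} (hjq : j ≠ q) (hjm : j ≠ m) (hmq : m ≠ q) :
    Eop d q m * (hOp d j - hOp d m) = (hOp d j - hOp d m - 1) * Eop d q m := by
  rw [mul_sub, Eop_mul_hOp, Eop_mul_hOp, if_neg hjq, if_neg hjm, if_neg hmq, if_pos rfl]
  simp only [sub_zero, zero_sub, neg_smul, one_smul, zero_smul, sub_neg_eq_add]
  noncomm_ring

theorem B_minus_mul_hOp_sub_hOp_right {j m : Fin n} (hjm : j ≠ m) :
    d.B false m * (hOp d j - hOp d m) = (hOp d j - hOp d m - 1) * d.B false m := by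
  have hm : d.B false m * hOp d m = hOp d m * d.B false m + d.B false m := by
    rw [hOp_mul_B_minus, if_pos rfl, sub_add_cancel]
  rw [mul_sub, ← (commute_hOp_B_minus d hjm).eq, hm]
  noncomm_ring

def hProd (d : OspData n U) (j : Fin n) (S : Finset (Fin n)) : U :=
  oprod S (fun l => hOp d j - hOp d l)

theorem hProd_empty (j : Fin n) : hProd d j ∅ = 1 := oprod_empty _

theorem hProd_insert_of_lt {j a : Fin n} {S : Finset (Fin n)} (h : ∀ b ∈ S, a < b) :
    hProd d j (insert a S) = (hOp d j - hOp d a) * hProd d j S :=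
  oprod_insert_of_lt _ h

theorem hProd_insert_of_gt {j a : Fin n} {S : Finset (Fin n)} (h : ∀ b ∈ S, b < a) :
    hProd d j (insert a S) = hProd d j S * (hOp d j - hOp d a) :=
  oprod_insert_of_gt _ h

theorem hProd_union_of_lt {j : Fin n} {A B : Finset (Fin n)} (h : ∀ a ∈ A, ∀ b ∈ B, a < b) :
    hProd d j (A ∪ B) = hProd d j A * hProd d j B :=
  oprod_union_of_lt _ h

theorem commute_Eop_hProd {a b j : Fin n} {S : Finset (Fin n)} (hja : j ≠ a) (hjb : j ≠ b)
    (hS : ∀ l ∈ S, l ≠ a ∧ l ≠ b) : Commute (Eop d a b) (hProd d j S) :=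
  commute_oprod fun l hl =>
    ((commute_hOp_Eop d hja hjb).sub_left (commute_hOp_Eop d (hS l hl).1 (hS l hl).2)).symm

/-! ### The recursion for the lowering operators -/

/- The hypothesis `hT` says that `q` follows `r` in the chain `sortIns r i T` and that the rest of
the chain is `sortIns q i T'`; it covers both `q = i, T = ∅` and `T = insert q T'`. -/
theorem sortIns_eq_cons {r q i : Fin n} {T T' : Finset (Fin n)} (hrq : r < q) (hqi : q ≤ i)
    (hT' : T' ⊆ Ioo q i) (hT : insert i T = insert q (insert i T')) :
    sortIns r i T = r :: sortIns q i T' := by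
  have hgt : ∀ b ∈ insert q (insert i T'), r < b := by
    simp only [mem_insert]
    rintro b (rfl | rfl | hb)
    exacts [hrq, hrq.trans_le hqi, hrq.trans (mem_Ioo.mp (hT' hb)).1]
  rw [sortIns, hT, sort_insert _ (fun b hb => (hgt b hb).le) fun h => lt_irrefl r (hgt r h)]
  rfl

theorem chainE_cons_sortIns {r q i : Fin n} {T' : Finset (Fin n)} (hqi : q ≤ i)
    (hT' : T' ⊆ Ioo q i) :
    chainE d (r :: sortIns q i T') = Eop d q r * chainE d (sortIns q i T') := by
  rcases hqi.eq_or_lt with rfl | hqi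
  · obtain rfl : T' = ∅ := by simpa using hT'
    simp [sortIns, chainE]
  · have hge : ∀ b ∈ insert i T', q < b := by
      simp only [mem_insert]
      rintro b (rfl | hb)
      exacts [hqi, (mem_Ioo.mp (hT' hb)).1]
    rw [sortIns, sort_insert _ (fun b hb => (hge b hb).le) fun h => lt_irrefl q (hge q h)]
    rfl

theorem le_of_mem_sortIns {q i a : Fin n} {T' : Finset (Fin n)} (hqi : q ≤ i)
    (hT' : T' ⊆ Ioo q i) (ha : a ∈ sortIns q i T') : q ≤ a := by
  simp only [sortIns, mem_sort, mem_insert] at ha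
  rcases ha with rfl | rfl | ha
  exacts [le_rfl, hqi, (mem_Ioo.mp (hT' ha)).1.le]

def zTerm (d : OspData n U) (j r i : Fin n) (T : Finset (Fin n)) : U :=
  chainE d (sortIns r i T) * d.B false i * hProd d j (Ioi r \ insert i T)

/-- `z_j^-` with its chains `I` started at `r` instead of `j`. -/
def zminusAt (d : OspData n U) (j r : Fin n) : U :=
  ∑ i ∈ Ici r, ∑ T ∈ (Ioo r i).powerset, zTerm d j r i T

theorem zminus_eq_zminusAt (j : Fin n) : zminus d j = zminusAt d j j := rfl

theorem zTerm_self (j r : Fin n) : zTerm d j r r ∅ = d.B false r * hProd d j (Ioi r) := by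
  simp [zTerm, sortIns, chainE, sdiff_singleton_eq_erase]

theorem zminusAt_eq_add (j r : Fin n) :
    zminusAt d j r = zTerm d j r r ∅ + ∑ i ∈ Ioi r, ∑ T ∈ (Ioo r i).powerset, zTerm d j r i T := by
  rw [zminusAt, ← Ioi_insert, sum_insert notMem_Ioi_self, Ioo_self, powerset_empty, sum_singleton]

theorem commute_hProd_chainE_mul_B {j q i : Fin n} {S T' : Finset (Fin n)} (hjq : j < q)
    (hS : ∀ l ∈ S, l < q) (hqi : q ≤ i) (hT' : T' ⊆ Ioo q i) :
    Commute (hProd d j S) (chainE d (sortIns q i T') * d.B false i) := by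
  have hcomm : ∀ x < q, Commute (hOp d x) (chainE d (sortIns q i T') * d.B false i) :=
    fun x hx => (commute_hOp_chainE d fun h => (le_of_mem_sortIns hqi hT' h).not_gt hx).mul_right
      (commute_hOp_B_minus d (hx.trans_le hqi).ne)
  exact (commute_oprod fun l hl => ((hcomm j hjq).sub_left (hcomm l (hS l hl))).symm).symm

theorem Ioi_sdiff_eq_union {r q i : Fin n} {T T' : Finset (Fin n)} (hrq : r < q) (hqi : q ≤ i)
    (hT' : T' ⊆ Ioo q i) (hT : insert i T = insert q (insert i T')) :
    Ioi r \ insert i T = Ioo r q ∪ (Ioi q \ insert i T') := by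
  have hT'' : ∀ x ∈ T', q < x := fun x hx => (mem_Ioo.mp (hT' hx)).1
  rw [hT]
  ext l
  simp only [mem_sdiff, mem_Ioi, mem_insert, mem_union, mem_Ioo, not_or]
  constructor
  · rintro ⟨hrl, hlq, hli, hlT⟩
    rcases lt_or_gt_of_ne hlq with h | h
    exacts [Or.inl ⟨hrl, h⟩, Or.inr ⟨h, hli, hlT⟩]
  · rintro (⟨hrl, hlq⟩ | ⟨hql, hli, hlT⟩)
    · exact ⟨hrl, hlq.ne, (hlq.trans_le hqi).ne, fun h => (hT'' l h).not_gt hlq⟩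
    · exact ⟨hrq.trans hql, hql.ne', hli, hlT⟩

theorem zTerm_eq_mul {j r q i : Fin n} {T T' : Finset (Fin n)} (hjr : j ≤ r) (hrq : r < q)
    (hqi : q ≤ i) (hT' : T' ⊆ Ioo q i) (hT : insert i T = insert q (insert i T')) :
    zTerm d j r i T = Eop d q r * (hProd d j (Ioo r q) * zTerm d j q i T') := by
  have hlt : ∀ a ∈ Ioo r q, ∀ b ∈ Ioi q \ insert i T', a < b := fun a ha b hb =>
    (mem_Ioo.mp ha).2.trans (mem_Ioi.mp (mem_sdiff.mp hb).1)
  have hcomm := commute_hProd_chainE_mul_B d (S := Ioo r q) (hjr.trans_lt hrq)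
    (fun l hl => (mem_Ioo.mp hl).2) hqi hT'
  rw [zTerm, zTerm, sortIns_eq_cons hrq hqi hT' hT, chainE_cons_sortIns d hqi hT',
    Ioi_sdiff_eq_union hrq hqi hT' hT, hProd_union_of_lt d hlt]
  have hswap := congrArg (· * hProd d j (Ioi q \ insert i T')) hcomm.eq.symm
  simp only [mul_assoc] at hswap ⊢
  rw [hswap]

theorem zminusAt_rec {j r : Fin n} (hjr : j ≤ r) :
    zminusAt d j r = d.B false r * hProd d j (Ioi r) +
      ∑ q ∈ Ioi r, Eop d q r * (hProd d j (Ioo r q) * zminusAt d j q) := by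
  rw [zminusAt_eq_add, zTerm_self, add_right_inj]
  calc ∑ i ∈ Ioi r, ∑ T ∈ (Ioo r i).powerset, zTerm d j r i T
      = ∑ i ∈ Ioi r, (Eop d i r * (hProd d j (Ioo r i) * zTerm d j i i ∅) +
          ∑ q ∈ Ioo r i, Eop d q r *
            (hProd d j (Ioo r q) * ∑ T ∈ (Ioo q i).powerset, zTerm d j q i T)) := by
        refine sum_congr rfl fun i hi => ?_
        have hri : r < i := mem_Ioi.mp hi
        rw [sum_powerset_eq_add_sum_insert_min,
          zTerm_eq_mul d hjr hri le_rfl (empty_subset _) (by simp)]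
        refine congrArg _ (sum_congr rfl fun q hq => ?_)
        have hq' := mem_Ioo.mp hq
        rw [Ioo_filter_gt, max_eq_right hq'.1.le, mul_sum, mul_sum]
        refine sum_congr rfl fun T' hT' => ?_
        rw [zTerm_eq_mul d hjr hq'.1 hq'.2.le (mem_powerset.mp hT') (insert_comm _ _ _)]
    _ = ∑ q ∈ Ioi r, Eop d q r * (hProd d j (Ioo r q) * zminusAt d j q) := by
        rw [sum_add_distrib, sum_comm' (t' := Ioi r) (s' := fun q => Ioi q) (by
          intro i q; simp only [mem_Ioi, mem_Ioo]; constructor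
          · exact fun h => ⟨h.2.2, h.2.1⟩
          · exact fun h => ⟨h.2.trans h.1, h.2, h.1⟩), ← sum_add_distrib]
        refine sum_congr rfl fun q _ => ?_
        rw [zminusAt_eq_add, mul_add, mul_add, mul_sum, mul_sum]

theorem hOp_sub_hOp_mul_zminusAt {j k m : Fin n} (hkm : (m : ℕ) = k + 1) (hjk : j ≤ k) :
    (hOp d k - hOp d j) * zminusAt d j m =
      Eop d k k * zminusAt d j m - d.B false m * hProd d j (Ioi k) -
        ∑ q ∈ Ioi k, Eop d q m * (hProd d j (Ioo k q) * zminusAt d j q) := by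
  have hk_lt_m : k < m := Fin.lt_def.mpr (by omega)
  have hjm : j ≠ m := (hjk.trans_lt hk_lt_m).ne
  have hIoi : Ioi k = insert m (Ioi m) := by
    ext; simp only [mem_Ioi, mem_insert, Fin.lt_def, Fin.ext_iff]; omega
  have hIoo : ∀ q ∈ Ioi m, Ioo k q = insert m (Ioo m q) := fun q hq => by
    have := Fin.lt_def.mp (mem_Ioi.mp hq)
    ext; simp only [mem_Ioo, mem_insert, Fin.lt_def, Fin.ext_iff]; omega
  have hIoo_empty : Ioo k m = ∅ := by
    ext; simp only [mem_Ioo, Fin.lt_def, notMem_empty, iff_false]; omega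
  have hshift : ∀ q ∈ Ioi m, Eop d q m * (hProd d j (Ioo k q) * zminusAt d j q) =
      (hOp d j - hOp d m - 1) * (Eop d q m * (hProd d j (Ioo m q) * zminusAt d j q)) :=
    fun q hq => by
      have hmq : m < q := mem_Ioi.mp hq
      rw [hIoo q hq, hProd_insert_of_lt d fun b hb => (mem_Ioo.mp hb).1]
      simp only [mul_assoc]
      rw [← mul_assoc (Eop d q m),
        Eop_mul_hOp_sub_hOp_right d (hjk.trans_lt (hk_lt_m.trans hmq)).ne hjm hmq.ne, mul_assoc]
  have hB : d.B false m * hProd d j (Ioi k) =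
      (hOp d j - hOp d m - 1) * (d.B false m * hProd d j (Ioi m)) := by
    rw [hIoi, hProd_insert_of_lt d fun b hb => mem_Ioi.mp hb, ← mul_assoc,
      B_minus_mul_hOp_sub_hOp_right d hjm, mul_assoc]
  have hEkk : Eop d k k = hOp d k - hOp d m + Eop d m m - 1 := by
    simp only [hOp, hkm, Nat.cast_add, Nat.cast_one, add_smul, one_smul]
    abel
  have hrec : (hOp d j - hOp d m - 1) * (d.B false m * hProd d j (Ioi m)) +
      (hOp d j - hOp d m - 1) * ∑ q ∈ Ioi m, Eop d q m * (hProd d j (Ioo m q) * zminusAt d j q) =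
      (hOp d j - hOp d m - 1) * zminusAt d j m := by
    rw [← mul_add, ← zminusAt_rec d (hjk.trans hk_lt_m.le)]
  rw [hB, hIoi, sum_insert notMem_Ioi_self, hIoo_empty, hProd_empty, one_mul,
    sum_congr rfl hshift, ← mul_sum, eq_sub_of_add_eq hrec, hEkk]
  noncomm_ring

/-! ### Action on vectors killed by the `E_{ab}` with `a < b` -/

section Module

variable {M : Type*} [AddCommGroup M] [Module U M]

theorem Eop_smul_B_minus_smul (k m r : Fin n) (x : M) :
    Eop d k m • d.B false r • x =
      d.B false r • Eop d k m • x - if k = r then d.B false m • x else 0 := by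
  rw [← mul_smul, Eop_mul_B_minus, sub_smul, mul_smul]
  split_ifs <;> simp

theorem Eop_smul_Eop_smul (k m q r : Fin n) (x : M) :
    Eop d k m • Eop d q r • x = Eop d q r • Eop d k m • x +
      ((if m = q then Eop d k r • x else 0) - if k = r then Eop d q m • x else 0) := by
  rw [← mul_smul, Eop_mul_Eop, add_smul, sub_smul, mul_smul]
  split_ifs <;> simp

theorem Eop_smul_hProd_smul_eq_zero {a b j : Fin n} {S : Finset (Fin n)} {x : M}
    (hx : Eop d a b • x = 0) : Eop d a b • hProd d j S • x = 0 := by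
  obtain ⟨w, hw⟩ := exists_mul_oprod_eq fun l _ => exists_Eop_mul_hOp_sub_hOp d a b j l
  rw [← mul_smul, hProd, hw, mul_smul, hx, smul_zero]

theorem Eop_smul_zminusAt_smul_eq_add_sum {w : M} (hw : ∀ a b : Fin n, a < b → Eop d a b • w = 0)
    {j k m r : Fin n} (hkm : k < m) (hjr : j ≤ r) :
    Eop d k m • zminusAt d j r • w =
      -(if k = r then d.B false m • hProd d j (Ioi r) • w else 0) +
      ∑ q ∈ Ioi r, (Eop d q r • Eop d k m • hProd d j (Ioo r q) • zminusAt d j q • w +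
        ((if m = q then Eop d k r • hProd d j (Ioo r q) • zminusAt d j q • w else 0) -
          if k = r then Eop d q m • hProd d j (Ioo r q) • zminusAt d j q • w else 0)) := by
  rw [zminusAt_rec d hjr, add_smul, smul_add, mul_smul, Eop_smul_B_minus_smul,
    Eop_smul_hProd_smul_eq_zero d (hw k m hkm), smul_zero, zero_sub, sum_smul, smul_sum]
  simp only [mul_smul]
  exact congrArg _ (sum_congr rfl fun q _ => Eop_smul_Eop_smul d k m q r _)

theorem Eop_smul_zminusAt_smul_of_lt {w : M} (hw : ∀ a b : Fin n, a < b → Eop d a b • w = 0)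
    {j k m r : Fin n} (hkm : (m : ℕ) = k + 1) (hjr : j ≤ r) (hrk : r < k)
    (ih : ∀ q, r < q → Eop d k m • zminusAt d j q • w =
      if q = k then (hOp d k - hOp d j) • zminusAt d j m • w else 0) :
    Eop d k m • zminusAt d j r • w = 0 := by
  have hk_lt_m : k < m := Fin.lt_def.mpr (by omega)
  have hjk : j ≠ k := (hjr.trans_lt hrk).ne
  have hjm : j ≠ m := (hjr.trans_lt (hrk.trans hk_lt_m)).ne
  have hIoo : Ioo r m = insert k (Ioo r k) := by
    ext; simp only [mem_Ioo, mem_insert, Fin.lt_def, Fin.ext_iff] at hrk ⊢; omega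
  have hcomm : Commute (Eop d k m) (hProd d j (Ioo r k)) :=
    commute_Eop_hProd d hjk hjm fun l hl =>
      ⟨(mem_Ioo.mp hl).2.ne, ((mem_Ioo.mp hl).2.trans hk_lt_m).ne⟩
  have hq_k : Eop d k m • hProd d j (Ioo r k) • zminusAt d j k • w =
      hProd d j (Ioo r k) • (hOp d k - hOp d j) • zminusAt d j m • w := by
    rw [← mul_smul, hcomm.eq, mul_smul, ih k hrk, if_pos rfl]
  have hq_ne_k : ∀ q ∈ Ioi r, q ≠ k →
      Eop d q r • Eop d k m • hProd d j (Ioo r q) • zminusAt d j q • w = 0 := fun q hq hqk => by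
    rw [Eop_smul_hProd_smul_eq_zero d (by rw [ih q (mem_Ioi.mp hq), if_neg hqk]), smul_zero]
  rw [Eop_smul_zminusAt_smul_eq_add_sum d hw hk_lt_m hjr]
  simp only [hrk.ne', if_false, neg_zero, zero_add, sub_zero]
  -- only the terms `q = k` and `q = m` survive, and they cancel
  rw [sum_add_distrib, sum_ite_eq, if_pos (mem_Ioi.mpr (hrk.trans hk_lt_m)),
    sum_eq_single_of_mem k (mem_Ioi.mpr hrk) hq_ne_k, hq_k, hIoo,
    hProd_insert_of_gt d fun b hb => (mem_Ioo.mp hb).2, mul_smul, ← smul_add, ← smul_add,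
    ← add_smul, sub_add_sub_cancel', sub_self, zero_smul, smul_zero, smul_zero]

theorem Eop_smul_zminusAt_smul_self {w : M} (hw : ∀ a b : Fin n, a < b → Eop d a b • w = 0)
    {j k m : Fin n} (hkm : (m : ℕ) = k + 1) (hjk : j ≤ k)
    (ih : ∀ q, k < q → Eop d k m • zminusAt d j q • w = 0) :
    Eop d k m • zminusAt d j k • w = (hOp d k - hOp d j) • zminusAt d j m • w := by
  have hk_lt_m : k < m := Fin.lt_def.mpr (by omega)
  have hIoo_empty : Ioo k m = ∅ := by
    ext; simp only [mem_Ioo, Fin.lt_def, notMem_empty, iff_false]; omega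
  have hsum : ∀ q ∈ Ioi k, Eop d q k • Eop d k m • hProd d j (Ioo k q) • zminusAt d j q • w +
      ((if m = q then Eop d k k • hProd d j (Ioo k q) • zminusAt d j q • w else 0) -
        if k = k then Eop d q m • hProd d j (Ioo k q) • zminusAt d j q • w else 0) =
      (if m = q then Eop d k k • hProd d j (Ioo k q) • zminusAt d j q • w else 0) -
        Eop d q m • hProd d j (Ioo k q) • zminusAt d j q • w := fun q hq => by
    rw [Eop_smul_hProd_smul_eq_zero d (ih q (mem_Ioi.mp hq)), smul_zero, zero_add, if_pos rfl]
  rw [Eop_smul_zminusAt_smul_eq_add_sum d hw hk_lt_m hjk, if_pos rfl, sum_congr rfl hsum,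
    sum_sub_distrib, sum_ite_eq, if_pos (mem_Ioi.mpr hk_lt_m), hIoo_empty, hProd_empty,
    one_smul, ← mul_smul (hOp d k - _), hOp_sub_hOp_mul_zminusAt d hkm hjk, sub_smul, sub_smul,
    sum_smul]
  simp only [mul_smul]
  abel

theorem Eop_smul_zminusAt_smul_of_gt {w : M} (hw : ∀ a b : Fin n, a < b → Eop d a b • w = 0)
    {j k m r : Fin n} (hkm : (m : ℕ) = k + 1) (hjr : j ≤ r) (hkr : k < r)
    (ih : ∀ q, r < q → Eop d k m • zminusAt d j q • w = 0) :
    Eop d k m • zminusAt d j r • w = 0 := by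
  have hm_le_r : m ≤ r := Fin.le_def.mpr (by rw [Fin.lt_def] at hkr; omega)
  rw [Eop_smul_zminusAt_smul_eq_add_sum d hw (Fin.lt_def.mpr (by omega)) hjr, if_neg hkr.ne,
    neg_zero, zero_add]
  refine sum_eq_zero fun q hq => ?_
  have hrq : r < q := mem_Ioi.mp hq
  rw [Eop_smul_hProd_smul_eq_zero d (ih q hrq), smul_zero, if_neg (hm_le_r.trans_lt hrq).ne,
    if_neg hkr.ne, sub_zero, add_zero]

theorem Eop_smul_zminusAt_smul_of_succ {w : M} (hw : ∀ a b : Fin n, a < b → Eop d a b • w = 0)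
    {j k m : Fin n} (hkm : (m : ℕ) = k + 1) (r : Fin n) (hjr : j ≤ r) :
    Eop d k m • zminusAt d j r • w =
      if r = k then (hOp d k - hOp d j) • zminusAt d j m • w else 0 := by
  induction r using WellFoundedGT.induction with
  | _ r ih =>
    have ih : ∀ q, r < q → Eop d k m • zminusAt d j q • w =
        if q = k then (hOp d k - hOp d j) • zminusAt d j m • w else 0 :=
      fun q hrq => ih q hrq (hjr.trans hrq.le)
    rcases lt_trichotomy r k with hrk | rfl | hkr
    · rw [if_neg hrk.ne, Eop_smul_zminusAt_smul_of_lt d hw hkm hjr hrk ih]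
    · rw [if_pos rfl, Eop_smul_zminusAt_smul_self d hw hkm hjr fun q hq => by
        rw [ih q hq, if_neg hq.ne']]
    · rw [if_neg hkr.ne', Eop_smul_zminusAt_smul_of_gt d hw hkm hjr hkr fun q hq => by
        rw [ih q hq, if_neg (hkr.trans hq).ne']]

theorem Eop_smul_eq_zero_of_forall_succ {x : M}
    (hx : ∀ k m : Fin n, (m : ℕ) = k + 1 → Eop d k m • x = 0) {a b : Fin n} (hab : a < b) :
    Eop d a b • x = 0 := by
  obtain ⟨g, hg⟩ : ∃ g, (b : ℕ) = a + g + 1 := ⟨b - a - 1, by rw [Fin.lt_def] at hab; omega⟩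
  induction g generalizing a with
  | zero => exact hx a b hg
  | succ g ih =>
    let c : Fin n := ⟨a + 1, by omega⟩
    have hab' : a ≠ b := Fin.ne_of_lt hab
    have hbr : Eop d a b = Eop d a c * Eop d c b - Eop d c b * Eop d a c := by
      rw [Eop_mul_Eop, if_pos rfl, if_neg hab']; abel
    rw [hbr, sub_smul, mul_smul, mul_smul,
      ih (Fin.lt_def.mpr (by simp only [c]; omega)) (by simp only [c]; omega), hx a c rfl, smul_zero,
      smul_zero, sub_zero]

theorem Eop_smul_zminus_smul_eq_zero {w : M} (hw : ∀ a b : Fin n, a < b → Eop d a b • w = 0)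
    (j : Fin n) {a b : Fin n} (hab : a < b) : Eop d a b • zminus d j • w = 0 := by
  refine Eop_smul_eq_zero_of_forall_succ d (fun k m hkm => ?_) hab
  rw [zminus_eq_zminusAt, Eop_smul_zminusAt_smul_of_succ d hw hkm j le_rfl]
  split_ifs with hjk
  · rw [hjk, sub_self, zero_smul]
  · rfl

end Module

end OspBasis

theorem stmt11_general {n : ℕ} {U : Type*} [Ring U] [Algebra ℂ U] (d : OspData n U)
    (j k l : Fin n) (hkl : k < l) :
    Eop d k l * zminus d j ∈
      Ideal.span {u : U | ∃ a b : Fin n, a < b ∧ u = Eop d a b}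
    ∧ ∀ (M : Type*) [AddCommGroup M] [Module U M] (w : M),
        (∀ a b : Fin n, a < b → Eop d a b • w = 0) →
        ∀ a b : Fin n, a < b → Eop d a b • (zminus d j • w) = 0 := by
  refine ⟨?_, fun M _ _ w hw a b hab => Eop_smul_zminus_smul_eq_zero d hw j hab⟩
  set J : Ideal U := Ideal.span {u : U | ∃ a b : Fin n, a < b ∧ u = Eop d a b}
  have hmk (u : U) : u • (Submodule.Quotient.mk 1 : U ⧸ J) = Submodule.Quotient.mk u := by
    rw [← Submodule.Quotient.mk_smul, smul_eq_mul, mul_one]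
  have h := Eop_smul_zminus_smul_eq_zero d (w := (Submodule.Quotient.mk 1 : U ⧸ J))
    (fun a b hab => by
      rw [hmk, Submodule.Quotient.mk_eq_zero]
      exact Ideal.subset_span ⟨a, b, hab, rfl⟩) j hkl
  rwa [← mul_smul, hmk, Submodule.Quotient.mk_eq_zero] at h

theorem stmt11 {n : ℕ} (hn : 0 < n) {U : Type*} [Ring U] [Algebra ℂ U] (d : OspData n U)
    (j k l : Fin n) (hkl : k < l) :
    Eop d k l * zminus d j ∈
      Ideal.span {u : U | ∃ a b : Fin n, a < b ∧ u = Eop d a b}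
    ∧ ∀ (M : Type*) [AddCommGroup M] [Module U M] (w : M),
        (∀ a b : Fin n, a < b → Eop d a b • w = 0) →
        ∀ a b : Fin n, a < b → Eop d a b • (zminus d j • w) = 0 :=
  stmt11_general d j k l hkl
end
end

section
/- Let ℓ ∈ {1,…,n}, γ ∈ M_n(ℕ) and λ ∈ ℙ with ℓ(λ) ≤ p. Then in L(p): B_ℓ^+ E^γ Ω_λ = Σ_{j=ℓ}^{n} Σ_{t=1}^{j−ℓ+1} Σ_{J∈𝓘_{ℓj}(t)} (−1)^{t−1} (∏_{u=1}^{t−1} γ_{j_{u+1} j_u}) E^{γ−e_J} B_j^+ Ω_λ, and B_ℓ^- E^γ Ω_λ = Σ_{j=1}^{ℓ} γ_{ℓj}^{1−δ_{ℓj}} E^{γ−e_{ℓj}} B_j^- Ω_λ (where γ_{ℓj}^{0} := 1, and any term whose scalar coefficient contains a factor γ_{ab} = 0 is zero, so that only matrices with nonnegative strictly-lower-triangular entries occur in E^{γ−e_J}). -/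
open scoped BigOperators

noncomputable section

/-!
Both formulas are identities in `U`, obtained by moving `B_l^±` to the right through the ordered
product `E^γ`, one factor at a time, with `[E_{kj}, B_l^+] = δ_{jl} B_k^+` and
`[E_{kj}, B_l^-] = -δ_{kl} B_j^-`.

For `B_l^-`, the correction `B_j^-` (`j < l`) created at a factor `E_{lj}` commutes with every later
factor, since those lie in rows `≥ l`; this is the second formula. For `B_l^+`, the correction
`B_m^+` (`m > l`) created at a factor `E_{ml}` commutes with every earlier factor, since those lie
in rows `≤ m`; this gives the recursion
`B_l^+ E^γ = E^γ B_l^+ - Σ_{m > l} γ_{ml} B_m^+ E^{γ - e_{ml}}`.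
Unfolding it by downward induction on `l` produces the sum over increasing chains
`l = j_1 < ⋯ < j_t = j`, once the chains from `l` are grouped by their second element.
-/

theorem mul_pow_eq_pow_mul_add {R : Type*} [Ring R] {b e c : R} (h : b * e = e * b + c)
    (hc : Commute e c) (g : ℕ) : b * e ^ g = e ^ g * b + g • (e ^ (g - 1) * c) := by
  induction g with
  | zero => simp
  | succ g ih =>
    rcases g with _ | g
    · simpa using h
    · rw [pow_succ, ← mul_assoc, ih, add_mul, mul_assoc, h, mul_add, ← mul_assoc, ← pow_succ,
        smul_mul_assoc, mul_assoc, ← hc.eq, ← mul_assoc, ← pow_succ]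
      simp only [Nat.add_sub_cancel, succ_nsmul _ (g + 1)]
      abel

namespace Finset

theorem sum_powerset_Ioo {α M : Type*} [LinearOrder α] [LocallyFiniteOrder α]
    [AddCommMonoid M] (a b : α) (f : Finset α → M) :
    ∑ T ∈ (Ioo a b).powerset, f T =
      f ∅ + ∑ m ∈ Ioo a b, ∑ T ∈ (Ioo m b).powerset, f (insert m T) := by
  have hne {T : Finset α} (hT : T ∈ (Ioo a b).powerset.erase ∅) : T.Nonempty :=
    nonempty_iff_ne_empty.2 (mem_erase.1 hT).1
  rw [← add_sum_erase _ _ (empty_mem_powerset _), sum_sigma']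
  congr 1
  symm
  refine sum_bij' (fun x _ => insert x.1 x.2)
    (fun T hT => ⟨T.min' (hne hT), T.erase (T.min' (hne hT))⟩) ?_ ?_ ?_ ?_ fun _ _ => rfl
  · rintro ⟨m, T⟩ h
    obtain ⟨hm, hT⟩ := mem_sigma.1 h
    rw [mem_powerset] at hT
    exact mem_erase.2 ⟨insert_ne_empty _ _, mem_powerset.2 <|
      insert_subset hm (hT.trans (Ioo_subset_Ioo_left (mem_Ioo.1 hm).1.le))⟩
  · intro T hT
    have hsub := mem_powerset.1 (mem_erase.1 hT).2
    refine mem_sigma.2 ⟨hsub (min'_mem _ (hne hT)), mem_powerset.2 fun x hx => ?_⟩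
    obtain ⟨hxm, hx⟩ := mem_erase.1 hx
    exact mem_Ioo.2 ⟨lt_of_le_of_ne (min'_le _ _ hx) (Ne.symm hxm), (mem_Ioo.1 (hsub hx)).2⟩
  · rintro ⟨m, T⟩ h
    have hT := mem_powerset.1 (mem_sigma.1 h).2
    have hmT : m ∉ T := fun hm => lt_irrefl m (mem_Ioo.1 (hT hm)).1
    have hmin : (insert m T).min' (insert_nonempty m T) = m :=
      le_antisymm (min'_le _ _ (mem_insert_self m T)) <| le_min' _ _ _ fun y hy => by
        rcases mem_insert.1 hy with rfl | hy
        exacts [le_rfl, (mem_Ioo.1 (hT hy)).1.le]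
    exact Sigma.ext hmin (heq_of_eq (by simp only [hmin, erase_insert hmT]))
  · intro T hT
    exact insert_erase (min'_mem _ (hne hT))

end Finset

namespace OspBasis

section Commutation

variable {n : ℕ} {U : Type*} [Ring U] [Algebra ℂ U] (d : OspData n U)

theorem Eop_mul_B_true (i j l : Fin n) :
    Eop d i j * d.B true l = d.B true l * Eop d i j + if j = l then d.B true i else 0 := by
  have h := d.rel i j l true false true
  simp only [br, sg, if_true, Bool.false_eq_true, if_false, sub_self, zero_smul, add_zero] at h
  simp only [Eop, smul_mul_assoc, mul_smul_comm]
  linear_combination (norm := module) (2⁻¹ : ℂ) • h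

theorem Eop_mul_B_false (i j l : Fin n) :
    Eop d i j * d.B false l = d.B false l * Eop d i j - if i = l then d.B false j else 0 := by
  have h := d.rel i j l true false false
  simp only [br, sg, if_true, Bool.false_eq_true, if_false, sub_self, zero_smul, zero_add] at h
  simp only [Eop, smul_mul_assoc, mul_smul_comm]
  linear_combination (norm := module) (2⁻¹ : ℂ) • h

theorem commute_Eop_B_true {i j l : Fin n} (h : j ≠ l) : Commute (Eop d i j) (d.B true l) := by
  simp [Commute, SemiconjBy, Eop_mul_B_true, h]

theorem commute_Eop_B_false {i j l : Fin n} (h : i ≠ l) : Commute (Eop d i j) (d.B false l) := by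
  simp [Commute, SemiconjBy, Eop_mul_B_false, h]

end Commutation

section Factors

variable {n : ℕ} {U : Type*} [Ring U] [Algebra ℂ U] (d : OspData n U)

def Efactor (γ : Matrix (Fin n) (Fin n) ℕ) (q : Fin n × Fin n) : U :=
  if q.2 < q.1 then Eop d q.1 q.2 ^ γ q.1 q.2 else 1

def Eprod (γ : Matrix (Fin n) (Fin n) ℕ) (P : List (Fin n × Fin n)) : U :=
  (P.map (Efactor d γ)).prod

def lexPairs (n : ℕ) : List (Fin n × Fin n) :=
  (List.finRange n).flatMap fun k => (List.finRange n).map (Prod.mk k)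

theorem Epow_eq_Eprod (γ : Matrix (Fin n) (Fin n) ℕ) : Epow d γ = Eprod d γ (lexPairs n) := by
  simp [Epow, Eprod, lexPairs, List.flatMap, List.prod_flatten, List.map_flatten, Efactor,
    Function.comp_def]

theorem pairwise_lexPairs : (lexPairs n).Pairwise fun p q => p.1 ≤ q.1 ∧ p ≠ q := by
  rw [lexPairs, List.pairwise_flatMap]
  refine ⟨fun k _ => ?_, (List.pairwise_lt_finRange n).imp fun {k k'} hk => ?_⟩
  · rw [List.pairwise_map]
    exact (List.pairwise_lt_finRange n).imp fun hj => ⟨le_rfl, by simpa using hj.ne⟩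
  · simp only [List.mem_map, List.mem_finRange, true_and]
    rintro _ ⟨j, rfl⟩ _ ⟨j', rfl⟩
    exact ⟨hk.le, fun h => hk.ne (congrArg Prod.fst h)⟩

theorem sum_map_lexPairs {M : Type*} [AddCommMonoid M] (g : Fin n × Fin n → M) :
    ((lexPairs n).map g).sum = ∑ k, ∑ j, g (k, j) := by
  simp [lexPairs, List.flatMap, List.sum_flatten, List.map_flatten, Fin.sum_univ_def,
    Function.comp_def]

variable {d}

theorem Efactor_sub_single_of_ne {γ : Matrix (Fin n) (Fin n) ℕ} {q : Fin n × Fin n} {a b : Fin n}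
    (h : q ≠ (a, b)) : Efactor d (γ - Matrix.single a b 1) q = Efactor d γ q := by
  obtain ⟨k, j⟩ := q
  have : ¬(a = k ∧ b = j) := by rintro ⟨rfl, rfl⟩; exact h rfl
  simp [Efactor, this]

theorem Efactor_sub_single_self (γ : Matrix (Fin n) (Fin n) ℕ) (a : Fin n) :
    Efactor d (γ - Matrix.single a a 1) = Efactor d γ := by
  funext q
  by_cases h : q = (a, a)
  · simp [h, Efactor]
  · exact Efactor_sub_single_of_ne h

theorem Eprod_sub_single_of_notMem {γ : Matrix (Fin n) (Fin n) ℕ} {P : List (Fin n × Fin n)}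
    {a b : Fin n} (h : (a, b) ∉ P) : Eprod d (γ - Matrix.single a b 1) P = Eprod d γ P :=
  congrArg List.prod <| List.map_congr_left fun _ hq =>
    Efactor_sub_single_of_ne fun hq' => h (hq' ▸ hq)

theorem commute_Efactor_B_true (γ : Matrix (Fin n) (Fin n) ℕ) {q : Fin n × Fin n} {m : Fin n}
    (h : q.1 ≤ m) : Commute (Efactor d γ q) (d.B true m) := by
  unfold Efactor
  split_ifs with hq
  · exact (commute_Eop_B_true d (Fin.ne_of_lt (lt_of_lt_of_le hq h))).pow_left _
  · exact Commute.one_left _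

theorem commute_Efactor_B_false (γ : Matrix (Fin n) (Fin n) ℕ) {q : Fin n × Fin n} {m : Fin n}
    (h : m < q.1) : Commute (Efactor d γ q) (d.B false m) := by
  unfold Efactor
  split_ifs
  · exact (commute_Eop_B_false d h.ne').pow_left _
  · exact Commute.one_left _

theorem B_true_mul_Efactor (γ : Matrix (Fin n) (Fin n) ℕ) (l : Fin n) (q : Fin n × Fin n) :
    d.B true l * Efactor d γ q = Efactor d γ q * d.B true l -
      if q.2 = l ∧ q.2 < q.1 then
        (γ q.1 q.2 : ℂ) • (d.B true q.1 * Efactor d (γ - Matrix.single q.1 q.2 1) q)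
      else 0 := by
  obtain ⟨k, j⟩ := q
  dsimp only
  by_cases hjk : j < k
  · by_cases hjl : j = l
    · subst hjl
      have hcomm := commute_Eop_B_true d hjk.ne (i := k)
      have hpow := mul_pow_eq_pow_mul_add (b := d.B true j) (c := -d.B true k)
        (by rw [Eop_mul_B_true, if_pos rfl]; abel) hcomm.neg_right (γ k j)
      simp only [Efactor, if_pos hjk, true_and, Matrix.sub_apply,
        Matrix.single_apply_same, hpow, mul_neg, smul_neg, ← (hcomm.pow_left _).eq,
        Nat.cast_smul_eq_nsmul, sub_eq_add_neg]
    · simp only [Efactor, if_pos hjk, if_neg (fun h : j = l ∧ j < k => hjl h.1), sub_zero]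
      exact ((commute_Eop_B_true d hjl).pow_left _).symm.eq
  · simp [Efactor, hjk]

theorem B_false_mul_Efactor (γ : Matrix (Fin n) (Fin n) ℕ) (l : Fin n) (q : Fin n × Fin n) :
    d.B false l * Efactor d γ q = Efactor d γ q * d.B false l +
      if q.1 = l ∧ q.2 < q.1 then
        (γ q.1 q.2 : ℂ) • (Efactor d (γ - Matrix.single q.1 q.2 1) q * d.B false q.2)
      else 0 := by
  obtain ⟨k, j⟩ := q
  dsimp only
  by_cases hjk : j < k
  · by_cases hkl : k = l
    · subst hkl
      have hcomm := commute_Eop_B_false d hjk.ne' (j := j)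
      have hpow := mul_pow_eq_pow_mul_add (b := d.B false k) (c := d.B false j)
        (by rw [Eop_mul_B_false, if_pos rfl]; abel) hcomm (γ k j)
      simp only [Efactor, if_pos hjk, true_and, Matrix.sub_apply,
        Matrix.single_apply_same, hpow, Nat.cast_smul_eq_nsmul]
    · simp only [Efactor, if_pos hjk, if_neg (fun h : k = l ∧ j < k => hkl h.1), add_zero]
      exact ((commute_Eop_B_false d hkl).pow_left _).symm.eq
  · simp [Efactor, hjk]

theorem Eprod_cons (γ : Matrix (Fin n) (Fin n) ℕ) (q : Fin n × Fin n) (P : List (Fin n × Fin n)) :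
    Eprod d γ (q :: P) = Efactor d γ q * Eprod d γ P :=
  List.prod_cons

theorem B_true_mul_Eprod (γ : Matrix (Fin n) (Fin n) ℕ) (l : Fin n) {P : List (Fin n × Fin n)}
    (hP : P.Pairwise fun p q => p.1 ≤ q.1 ∧ p ≠ q) :
    d.B true l * Eprod d γ P = Eprod d γ P * d.B true l -
      (P.map fun q => if q.2 = l ∧ q.2 < q.1 then
        (γ q.1 q.2 : ℂ) • (d.B true q.1 * Eprod d (γ - Matrix.single q.1 q.2 1) P)
      else 0).sum := by
  induction P with
  | nil => simp [Eprod]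
  | cons q P ih =>
    obtain ⟨hq, hP⟩ := List.pairwise_cons.1 hP
    have hqP : (q.1, q.2) ∉ P := fun h => (hq q h).2 rfl
    have hS : Efactor d γ q * (P.map fun r => if r.2 = l ∧ r.2 < r.1 then
        (γ r.1 r.2 : ℂ) • (d.B true r.1 * Eprod d (γ - Matrix.single r.1 r.2 1) P) else 0).sum =
        (P.map fun r => if r.2 = l ∧ r.2 < r.1 then
        (γ r.1 r.2 : ℂ) • (d.B true r.1 * Eprod d (γ - Matrix.single r.1 r.2 1) (q :: P))
          else 0).sum := by
      rw [← List.sum_map_mul_left]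
      refine congrArg List.sum (List.map_congr_left fun r hr => ?_)
      split_ifs
      · rw [mul_smul_comm, ← mul_assoc, (commute_Efactor_B_true γ (hq r hr).1).eq, Eprod_cons,
          Efactor_sub_single_of_ne (hq r hr).2, mul_assoc]
      · exact mul_zero _
    rw [Eprod_cons, ← mul_assoc, B_true_mul_Efactor, sub_mul, mul_assoc, ih hP, mul_sub,
      ← mul_assoc, hS, List.map_cons, List.sum_cons, Eprod_cons, Eprod_sub_single_of_notMem hqP]
    split_ifs
    · rw [smul_mul_assoc, mul_assoc (d.B true q.1)]
      abel
    · simp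

theorem B_false_mul_Eprod (γ : Matrix (Fin n) (Fin n) ℕ) (l : Fin n) {P : List (Fin n × Fin n)}
    (hP : P.Pairwise fun p q => p.1 ≤ q.1 ∧ p ≠ q) :
    d.B false l * Eprod d γ P = Eprod d γ P * d.B false l +
      (P.map fun q => if q.1 = l ∧ q.2 < q.1 then
        (γ q.1 q.2 : ℂ) • (Eprod d (γ - Matrix.single q.1 q.2 1) P * d.B false q.2)
      else 0).sum := by
  induction P with
  | nil => simp [Eprod]
  | cons q P ih =>
    obtain ⟨hq, hP⟩ := List.pairwise_cons.1 hP
    have hqP : (q.1, q.2) ∉ P := fun h => (hq q h).2 rfl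
    have hS : Efactor d γ q * (P.map fun r => if r.1 = l ∧ r.2 < r.1 then
        (γ r.1 r.2 : ℂ) • (Eprod d (γ - Matrix.single r.1 r.2 1) P * d.B false r.2) else 0).sum =
        (P.map fun r => if r.1 = l ∧ r.2 < r.1 then
        (γ r.1 r.2 : ℂ) • (Eprod d (γ - Matrix.single r.1 r.2 1) (q :: P) * d.B false r.2)
          else 0).sum := by
      rw [← List.sum_map_mul_left]
      refine congrArg List.sum (List.map_congr_left fun r hr => ?_)
      split_ifs
      · rw [mul_smul_comm, ← mul_assoc, Eprod_cons, Efactor_sub_single_of_ne (hq r hr).2]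
      · exact mul_zero _
    rw [Eprod_cons, ← mul_assoc, B_false_mul_Efactor, add_mul, mul_assoc, ih hP, mul_add,
      ← mul_assoc, hS, List.map_cons, List.sum_cons, Eprod_cons, Eprod_sub_single_of_notMem hqP]
    split_ifs with hql
    · have hB : Commute (Eprod d γ P) (d.B false q.2) :=
        Commute.list_prod_left _ _ fun x hx => by
          obtain ⟨r, hr, rfl⟩ := List.mem_map.1 hx
          exact commute_Efactor_B_false γ (hql.2.trans_le ((hq r hr).1))
      rw [smul_mul_assoc, mul_assoc _ (d.B false q.2), ← hB.eq, ← mul_assoc]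
      abel
    · simp

theorem B_true_mul_Epow (γ : Matrix (Fin n) (Fin n) ℕ) (l : Fin n) :
    d.B true l * Epow d γ = Epow d γ * d.B true l -
      ∑ m ∈ Finset.Ioi l, (γ m l : ℂ) • (d.B true m * Epow d (γ - Matrix.single m l 1)) := by
  simp only [Epow_eq_Eprod]
  rw [B_true_mul_Eprod γ l pairwise_lexPairs, sum_map_lexPairs]
  simp [ite_and, Finset.sum_ite_eq', ← Finset.sum_filter, Finset.filter_lt_eq_Ioi]

theorem B_false_mul_Epow (γ : Matrix (Fin n) (Fin n) ℕ) (l : Fin n) :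
    d.B false l * Epow d γ = Epow d γ * d.B false l +
      ∑ j ∈ Finset.Iio l, (γ l j : ℂ) • (Epow d (γ - Matrix.single l j 1) * d.B false j) := by
  simp only [Epow_eq_Eprod]
  rw [B_false_mul_Eprod γ l pairwise_lexPairs, sum_map_lexPairs]
  simp [ite_and, Finset.sum_ite_eq', ← Finset.sum_filter, Finset.filter_gt_eq_Iio]

theorem Epow_sub_single_self (γ : Matrix (Fin n) (Fin n) ℕ) (a : Fin n) :
    Epow d (γ - Matrix.single a a 1) = Epow d γ := by
  rw [Epow_eq_Eprod, Epow_eq_Eprod, Eprod, Eprod, Efactor_sub_single_self]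

theorem B_false_mul_Epow_eq_sum (γ : Matrix (Fin n) (Fin n) ℕ) (l : Fin n) :
    d.B false l * Epow d γ = ∑ j ∈ Finset.Iic l,
      (if l = j then (1 : ℂ) else (γ l j : ℂ)) •
        (Epow d (γ - Matrix.single l j 1) * d.B false j) := by
  rw [B_false_mul_Epow, ← Finset.Iio_insert, Finset.sum_insert Finset.notMem_Iio_self, if_pos rfl,
    one_smul, Epow_sub_single_self]
  congr 1
  exact Finset.sum_congr rfl fun j hj => by rw [if_neg (Finset.mem_Iio.1 hj).ne']

end Factors

section Chains

variable {n : ℕ} {U : Type*} [Ring U] [Algebra ℂ U] (d : OspData n U)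

@[simp]
theorem natMatrix_sub_zero (γ : Matrix (Fin n) (Fin n) ℕ) : γ - 0 = γ := by
  ext; simp

theorem natMatrix_sub_add (γ A B : Matrix (Fin n) (Fin n) ℕ) : γ - (A + B) = γ - A - B := by
  ext; simp [Nat.sub_sub]

theorem sortIns_eq_cons_s15 {i j : Fin n} {T : Finset (Fin n)} (h : ∀ x ∈ insert j T, i < x) :
    sortIns i j T = i :: (insert j T).sort (· ≤ ·) :=
  Finset.sort_insert _ (fun x hx => (h x hx).le) fun hi => lt_irrefl i (h i hi)

theorem chainProd_congr {γ γ' : Matrix (Fin n) (Fin n) ℕ} :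
    ∀ {L : List (Fin n)}, (∀ a ∈ L, ∀ b, γ b a = γ' b a) → chainProd γ L = chainProd γ' L
  | [], _ => rfl
  | [_], _ => rfl
  | a :: b :: L, h => by
    rw [chainProd, chainProd, h a List.mem_cons_self,
      chainProd_congr fun x hx => h x (List.mem_cons_of_mem _ hx)]

def chainTerm (γ : Matrix (Fin n) (Fin n) ℕ) (l j : Fin n) (T : Finset (Fin n)) : U :=
  ((-1 : ℂ) ^ (T.card + if l = j then 0 else 1) * (chainProd γ (sortIns l j T) : ℂ)) •
    (Epow d (γ - eJmat (sortIns l j T)) * d.B true j)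

def chainSum (γ : Matrix (Fin n) (Fin n) ℕ) (l : Fin n) : U :=
  ∑ j ∈ Finset.Ici l, ∑ T ∈ (Finset.Ioo l j).powerset, chainTerm d γ l j T

theorem chainTerm_self (γ : Matrix (Fin n) (Fin n) ℕ) (l : Fin n) :
    chainTerm d γ l l ∅ = Epow d γ * d.B true l := by
  simp [chainTerm, sortIns, chainProd, eJmat]

theorem chainTerm_empty (γ : Matrix (Fin n) (Fin n) ℕ) {l j : Fin n} (h : l < j) :
    chainTerm d γ l j ∅ = -(γ j l : ℂ) • chainTerm d (γ - Matrix.single j l 1) j j ∅ := by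
  have hl : sortIns l j ∅ = [l, j] := by rw [sortIns_eq_cons_s15 (by simp [h])]; simp
  have hj : sortIns j j (∅ : Finset (Fin n)) = [j] := by simp [sortIns]
  rw [chainTerm, chainTerm, hl, hj]
  simp [chainProd, eJmat, h.ne]

theorem chainTerm_insert (γ : Matrix (Fin n) (Fin n) ℕ) {l m j : Fin n} {T : Finset (Fin n)}
    (hlm : l < m) (hmj : m < j) (hT : T ⊆ Finset.Ioo m j) :
    chainTerm d γ l j (insert m T) =
      -(γ m l : ℂ) • chainTerm d (γ - Matrix.single m l 1) m j T := by
  have hgt : ∀ x ∈ insert j T, m < x := by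
    simpa [hmj] using fun x hx => (Finset.mem_Ioo.1 (hT hx)).1
  have hmT : m ∉ T := fun h => lt_irrefl m (hgt m (Finset.mem_insert_of_mem h))
  set L := (insert j T).sort (· ≤ ·)
  have hm : sortIns m j T = m :: L := sortIns_eq_cons_s15 hgt
  have hl : sortIns l j (insert m T) = l :: m :: L := by
    have : ∀ x ∈ insert j (insert m T), l < x := by
      rw [Finset.insert_comm]
      simpa [hlm] using fun x hx => hlm.trans (hgt x hx)
    rw [sortIns_eq_cons_s15 this, Finset.insert_comm]
    exact congrArg (l :: ·) hm
  have hcol : ∀ a ∈ m :: L, ∀ b,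
      (γ - Matrix.single m l 1 : Matrix (Fin n) (Fin n) ℕ) b a = γ b a := by
    intro a ha b
    have hla : l ≠ a := by
      rcases List.mem_cons.1 ha with rfl | ha
      exacts [hlm.ne, (hlm.trans (hgt a (Finset.mem_sort _ |>.1 ha))).ne]
    simp [Matrix.sub_apply, hla]
  rw [chainTerm, chainTerm, hl, hm]
  simp only [chainProd, eJmat]
  rw [chainProd_congr hcol, natMatrix_sub_add, Finset.card_insert_of_notMem hmT,
    if_neg (hlm.trans hmj).ne, if_neg hmj.ne, smul_smul]
  congr 1
  push_cast
  ring

theorem sum_chainTerm_of_lt (γ : Matrix (Fin n) (Fin n) ℕ) {l j : Fin n} (h : l < j) :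
    ∑ T ∈ (Finset.Ioo l j).powerset, chainTerm d γ l j T =
      -∑ m ∈ Finset.Ioc l j, (γ m l : ℂ) •
        ∑ T ∈ (Finset.Ioo m j).powerset, chainTerm d (γ - Matrix.single m l 1) m j T := by
  rw [Finset.sum_powerset_Ioo, ← Finset.Ioo_insert_right h,
    Finset.sum_insert Finset.right_notMem_Ioo, Finset.Ioo_self, Finset.powerset_empty,
    Finset.sum_singleton, chainTerm_empty d γ h, neg_add, ← neg_smul, ← Finset.sum_neg_distrib]
  congr 1
  refine Finset.sum_congr rfl fun m hm => ?_
  obtain ⟨hlm, hmj⟩ := Finset.mem_Ioo.1 hm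
  rw [Finset.smul_sum, ← Finset.sum_neg_distrib]
  refine Finset.sum_congr rfl fun T hT => ?_
  rw [chainTerm_insert d γ hlm hmj (Finset.mem_powerset.1 hT), neg_smul]

theorem chainSum_eq (γ : Matrix (Fin n) (Fin n) ℕ) (l : Fin n) :
    chainSum d γ l = Epow d γ * d.B true l -
      ∑ m ∈ Finset.Ioi l, (γ m l : ℂ) • chainSum d (γ - Matrix.single m l 1) m := by
  rw [chainSum, ← Finset.Ioi_insert, Finset.sum_insert Finset.notMem_Ioi_self, Finset.Ioo_self,
    Finset.powerset_empty, Finset.sum_singleton, chainTerm_self,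
    Finset.sum_congr rfl fun j hj => sum_chainTerm_of_lt d γ (Finset.mem_Ioi.1 hj),
    Finset.sum_neg_distrib, ← sub_eq_add_neg]
  congr 1
  simp only [chainSum, Finset.smul_sum]
  refine Finset.sum_comm' fun j m => ?_
  simp only [Finset.mem_Ioi, Finset.mem_Ioc, Finset.mem_Ici]
  exact ⟨fun h => ⟨h.2.2, h.2.1⟩, fun h => ⟨h.2.trans_le h.1, h.2, h.1⟩⟩

theorem B_true_mul_Epow_eq_chainSum (γ : Matrix (Fin n) (Fin n) ℕ) (l : Fin n) :
    d.B true l * Epow d γ = chainSum d γ l := by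
  induction l using WellFoundedGT.induction generalizing γ with
  | _ l ih =>
    rw [B_true_mul_Epow, chainSum_eq]
    congr 1
    exact Finset.sum_congr rfl fun m hm => by rw [ih m (Finset.mem_Ioi.1 hm)]

end Chains

end OspBasis

open OspBasis

theorem stmt15_general {n : ℕ} (hn : 0 < n)
    {U : Type*} [Ring U] [Algebra ℂ U] (d : OspData n U)
    {M : Type*} [AddCommGroup M] [Module ℂ M] [Module U M] [IsScalarTower ℂ U M]
    (v0 : M)
    (lam : Fin n → ℕ)
    (γ : Matrix (Fin n) (Fin n) ℕ) (ell : Fin n) :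
    (d.B true ell • (Epow d γ • OmegaLam d hn lam v0) =
      ∑ j ∈ Finset.Ici ell, ∑ T ∈ (Finset.Ioo ell j).powerset,
        (((-1 : ℂ) ^ (T.card + (if ell = j then 0 else 1))) *
            (chainProd γ (sortIns ell j T) : ℂ)) •
          (Epow d (γ - eJmat (sortIns ell j T)) • (d.B true j • OmegaLam d hn lam v0)))
    ∧ (d.B false ell • (Epow d γ • OmegaLam d hn lam v0) =
      ∑ j ∈ Finset.Iic ell,
        (if ell = j then (1 : ℂ) else (γ ell j : ℂ)) •
          (Epow d (γ - Matrix.single ell j 1) •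
            (d.B false j • OmegaLam d hn lam v0))) := by
  constructor
  · rw [← mul_smul, B_true_mul_Epow_eq_chainSum, chainSum]
    simp only [chainTerm, Finset.sum_smul, smul_assoc, mul_smul]
  · rw [← mul_smul, B_false_mul_Epow_eq_sum]
    simp only [Finset.sum_smul, smul_assoc, mul_smul]

theorem stmt15 {n : ℕ} (hn : 0 < n)
    {U : Type*} [Ring U] [Algebra ℂ U] (d : OspData n U)
    {M : Type*} [AddCommGroup M] [Module ℂ M] [Module U M] [IsScalarTower ℂ U M]
    [IsSimpleModule U M]
    (p : ℕ) (hp : 0 < p) (v0 : M) (hv0 : v0 ≠ 0)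
    (hgen : Submodule.span U {v0} = ⊤)
    (hann : ∀ j : Fin n, d.B false j • v0 = 0)
    (hwt : ∀ j : Fin n, Eop d j j • v0 = ((p : ℂ) / 2) • v0)
    (lam : Fin n → ℕ) (hlam : Antitone lam) (hlen : plen lam ≤ p)
    (γ : Matrix (Fin n) (Fin n) ℕ) (ell : Fin n) :
    (d.B true ell • (Epow d γ • OmegaLam d hn lam v0) =
      ∑ j ∈ Finset.Ici ell, ∑ T ∈ (Finset.Ioo ell j).powerset,
        (((-1 : ℂ) ^ (T.card + (if ell = j then 0 else 1))) *
            (chainProd γ (sortIns ell j T) : ℂ)) •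
          (Epow d (γ - eJmat (sortIns ell j T)) • (d.B true j • OmegaLam d hn lam v0)))
    ∧ (d.B false ell • (Epow d γ • OmegaLam d hn lam v0) =
      ∑ j ∈ Finset.Iic ell,
        (if ell = j then (1 : ℂ) else (γ ell j : ℂ)) •
          (Epow d (γ - Matrix.single ell j 1) •
            (d.B false j • OmegaLam d hn lam v0))) :=
  stmt15_general hn d v0 lam γ ell
end
end
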